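/- arXiv:2605.07775 — 5 statements merged into one kernel-verified Lean document; each statement's English description precedes it below -/
import Mathlib

section
/- Let A be a finite action set, r : A → ℝ a reward function, π_ref a fully supported probability distribution on A, and α, β > 0. Define the regularized objective J(π, r) = E_{a∼π}[r(a)] − β·KL(π ‖ π_ref) + α·H[π], where H is Shannon entropy. Then the unique maximizer over probability distributions π on A is π*(a) = π_ref(a)^{β/(β+α)} · exp(r(a)/(β+α)) / Z, where Z = Σ_{a'} π_ref(a')^{β/(β+α)} exp(r(a')/(β+α)). -/
open BigOperators Finset

lemma poets_term_ineq {x y : ℝ} (hx : 0 ≤ x) (hy : 0 < y) :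
    x - y ≤ x * Real.log (x / y) ∧ (x * Real.log (x / y) = x - y → x = y) := by
  rcases eq_or_lt_of_le hx with h | h
  · constructor
    · simp [← h]; linarith
    · intro he; simp [← h] at he; linarith
  · have hxy : 0 < y / x := by positivity
    have hlog := Real.log_le_sub_one_of_pos hxy
    have hlogd : Real.log (x / y) = - Real.log (y / x) := by
      rw [← Real.log_inv]; congr 1; field_simp
    constructor
    · rw [hlogd]
      nlinarith [mul_le_mul_of_nonneg_left hlog (le_of_lt h),
        mul_div_cancel₀ y h.ne']
    · intro he
      by_contra hne
      have hne1 : y / x ≠ 1 := by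
        intro h1
        apply hne
        field_simp at h1
        linarith
      have hlt := Real.log_lt_sub_one_of_pos hxy hne1
      rw [hlogd] at he
      nlinarith [mul_lt_mul_of_pos_left hlt h, mul_div_cancel₀ y h.ne']

lemma poets_gibbs {A : Type*} [Fintype A] (p q : A → ℝ)
    (hp : ∀ a, 0 ≤ p a) (hq : ∀ a, 0 < q a)
    (hps : ∑ a, p a = 1) (hqs : ∑ a, q a = 1) :
    0 ≤ ∑ a, p a * Real.log (p a / q a) ∧
    ((∑ a, p a * Real.log (p a / q a)) = 0 → p = q) := by
  have key : ∀ a, p a - q a ≤ p a * Real.log (p a / q a) :=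
    fun a => (poets_term_ineq (hp a) (hq a)).1
  have hsum : ∑ a, (p a - q a) ≤ ∑ a, p a * Real.log (p a / q a) :=
    Finset.sum_le_sum (fun a _ => key a)
  rw [Finset.sum_sub_distrib, hps, hqs] at hsum
  constructor
  · linarith
  · intro h0
    funext a
    have hzero : ∀ a ∈ Finset.univ,
        p a * Real.log (p a / q a) - (p a - q a) = 0 := by
      apply (Finset.sum_eq_zero_iff_of_nonneg ?_).1
      · rw [Finset.sum_sub_distrib, h0, Finset.sum_sub_distrib, hps, hqs]; ring
      · intro a _; simp; linarith [key a]
    have := hzero a (Finset.mem_univ a)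
    exact (poets_term_ineq (hp a) (hq a)).2 (by linarith)

/-- The unique maximizer of the KL- and entropy-regularized objective
`J(π) = E_π[r] − β·KL(π‖π_ref) + α·H[π]` over the probability simplex on a finite set
is `π*(a) = π_ref(a)^{β/(β+α)} · exp(r(a)/(β+α)) / Z`. -/
theorem poets_regularized_optimal_policy
    {A : Type*} [Fintype A] [Nonempty A]
    (r : A → ℝ) (pref : A → ℝ) (α β : ℝ)
    (hα : 0 < α) (hβ : 0 < β)
    (href_pos : ∀ a, 0 < pref a) (href_sum : ∑ a, pref a = 1)
    (J : (A → ℝ) → ℝ)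
    (hJ : ∀ p : A → ℝ, J p =
      (∑ a, p a * r a)
        - β * (∑ a, p a * Real.log (p a / pref a))
        + α * (-(∑ a, p a * Real.log (p a))))
    (Z : ℝ)
    (hZ : Z = ∑ a, pref a ^ (β / (β + α)) * Real.exp (r a / (β + α)))
    (pstar : A → ℝ)
    (hpstar : ∀ a, pstar a =
      pref a ^ (β / (β + α)) * Real.exp (r a / (β + α)) / Z) :
    ∀ p : A → ℝ, (∀ a, 0 ≤ p a) → (∑ a, p a = 1) →
      J p ≤ J pstar ∧ (J p = J pstar → p = pstar) := by
  set s : ℝ := β + α with hs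
  have hspos : 0 < s := by positivity
  have hZpos : 0 < Z := by
    rw [hZ]
    apply Finset.sum_pos
    · intro a _
      have := href_pos a
      positivity
    · exact Finset.univ_nonempty
  have hpstar_pos : ∀ a, 0 < pstar a := by
    intro a
    rw [hpstar a]
    have := href_pos a
    positivity
  have hpstar_sum : ∑ a, pstar a = 1 := by
    have : ∑ a, pstar a = (∑ a, pref a ^ (β / s) * Real.exp (r a / s)) / Z := by
      rw [Finset.sum_div]
      exact Finset.sum_congr rfl fun a _ => hpstar a
    rw [this, ← hZ, div_self hZpos.ne']
  have hlogstar : ∀ a, s * Real.log (pstar a)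
      = β * Real.log (pref a) + r a - s * Real.log Z := by
    intro a
    rw [hpstar a, Real.log_div (by have := href_pos a; positivity) hZpos.ne',
      Real.log_mul (by have := href_pos a; positivity) (Real.exp_ne_zero _),
      Real.log_rpow (href_pos a), Real.log_exp]
    field_simp
  -- key formula : J q = s log Z - s * KL(q ‖ pstar)
  have key : ∀ q : A → ℝ, (∀ a, 0 ≤ q a) → (∑ a, q a = 1) →
      J q = s * Real.log Z - s * ∑ a, q a * Real.log (q a / pstar a) := by
    intro q hq hqs
    have e1 : ∑ a, q a * Real.log (q a / pstar a)
        = (∑ a, q a * Real.log (q a)) - ∑ a, q a * Real.log (pstar a) := by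
      rw [← Finset.sum_sub_distrib]
      apply Finset.sum_congr rfl
      intro a _
      rcases eq_or_lt_of_le (hq a) with h | h
      · simp [← h]
      · rw [Real.log_div h.ne' (hpstar_pos a).ne']; ring
    have e2 : ∑ a, q a * Real.log (q a / pref a)
        = (∑ a, q a * Real.log (q a)) - ∑ a, q a * Real.log (pref a) := by
      rw [← Finset.sum_sub_distrib]
      apply Finset.sum_congr rfl
      intro a _
      rcases eq_or_lt_of_le (hq a) with h | h
      · simp [← h]
      · rw [Real.log_div h.ne' (href_pos a).ne']; ring
    have e3 : s * ∑ a, q a * Real.log (pstar a)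
        = β * (∑ a, q a * Real.log (pref a)) + (∑ a, q a * r a)
          - s * Real.log Z := by
      rw [Finset.mul_sum]
      have : ∀ a ∈ Finset.univ, s * (q a * Real.log (pstar a))
          = β * (q a * Real.log (pref a)) + q a * r a
            - (s * Real.log Z) * q a := by
        intro a _
        linear_combination q a * hlogstar a
      rw [Finset.sum_congr rfl this, Finset.sum_sub_distrib,
        Finset.sum_add_distrib, ← Finset.mul_sum, ← Finset.mul_sum, hqs, mul_one]
    rw [hJ q, e1, e2]
    rw [hs] at e3 ⊢
    linear_combination -e3
  intro p hp hps
  have hJp := key p hp hps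
  have hJstar := key pstar (fun a => (hpstar_pos a).le) hpstar_sum
  have hKLstar : ∑ a, pstar a * Real.log (pstar a / pstar a) = 0 := by
    apply Finset.sum_eq_zero
    intro a _
    rw [div_self (hpstar_pos a).ne', Real.log_one, mul_zero]
  rw [hKLstar, mul_zero, sub_zero] at hJstar
  obtain ⟨hKL_nonneg, hKL_eq⟩ := poets_gibbs p pstar hp hpstar_pos hps hpstar_sum
  constructor
  · rw [hJp, hJstar]
    nlinarith
  · intro heq
    rw [hJp, hJstar] at heq
    apply hKL_eq
    have : s * ∑ a, p a * Real.log (p a / pstar a) = 0 := by linarith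
    exact (mul_eq_zero.1 this).resolve_left hspos.ne'
end

section
/- Let A be a finite set, π and π_ref fully supported distributions on A, α, β > 0, and Z > 0. Define the implicit reward r_π(a) = (β+α)·log π(a) − β·log π_ref(a) + (β+α)·log Z. Then π is exactly the maximizer of the regularized objective J(·, r_π) = E_π[r_π] − β·KL(· ‖ π_ref) + α·H[·]; i.e., for every distribution π' on A, J(π', r_π) ≤ J(π, r_π). -/
open BigOperators Finset

lemma kl_term_lb (q p : ℝ) (hq : 0 ≤ q) (hp : 0 < p) :
    q - p ≤ q * Real.log (q / p) := by
  rcases eq_or_lt_of_le hq with h | h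
  · simp [← h, hp.le]
  · have h1 : Real.log (p / q) ≤ p / q - 1 :=
      Real.log_le_sub_one_of_pos (div_pos hp h)
    have h2 : Real.log (q / p) = - Real.log (p / q) := by
      rw [← Real.log_inv, inv_div]
    have h3 := mul_le_mul_of_nonneg_left h1 h.le
    have h4 : q * (p / q - 1) = p - q := by field_simp
    rw [h2]
    linarith

/-- A fully supported policy `π` is exactly the maximizer of the regularized objective
`J(·, r_π)` for its implicit reward `r_π(a) = (β+α) log π(a) − β log π_ref(a) + (β+α) log Z`. -/
theorem poets_implicit_reward_optimality
    {A : Type*} [Fintype A] [Nonempty A]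
    (pref p : A → ℝ) (α β Z : ℝ)
    (hα : 0 < α) (hβ : 0 < β) (hZ : 0 < Z)
    (href_pos : ∀ a, 0 < pref a) (href_sum : ∑ a, pref a = 1)
    (hp_pos : ∀ a, 0 < p a) (hp_sum : ∑ a, p a = 1)
    (rp : A → ℝ)
    (hrp : ∀ a, rp a =
      (β + α) * Real.log (p a) - β * Real.log (pref a) + (β + α) * Real.log Z)
    (J : (A → ℝ) → ℝ)
    (hJ : ∀ q : A → ℝ, J q =
      (∑ a, q a * rp a)
        - β * (∑ a, q a * Real.log (q a / pref a))
        + α * (-(∑ a, q a * Real.log (q a)))) :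
    ∀ q : A → ℝ, (∀ a, 0 ≤ q a) → (∑ a, q a = 1) → J q ≤ J p := by
  intro q hq0 hq1
  -- closed form of J
  have key : ∀ (f : A → ℝ), (∀ a, 0 ≤ f a) → (∑ a, f a = 1) →
      J f = (β + α) * Real.log Z - (β + α) * ∑ a, f a * Real.log (f a / p a) := by
    intro f hf0 hf1
    rw [hJ]
    have hterm : ∀ a, f a * rp a - β * (f a * Real.log (f a / pref a))
        + α * (-(f a * Real.log (f a)))
        = (β + α) * Real.log Z * f a - (β + α) * (f a * Real.log (f a / p a)) := by
      intro a
      rcases eq_or_lt_of_le (hf0 a) with h | h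
      · simp [← h]
      · rw [hrp a, Real.log_div h.ne' (hp_pos a).ne',
            Real.log_div h.ne' (href_pos a).ne']
        ring
    calc (∑ a, f a * rp a) - β * (∑ a, f a * Real.log (f a / pref a))
          + α * (-(∑ a, f a * Real.log (f a)))
        = ∑ a, (f a * rp a - β * (f a * Real.log (f a / pref a))
            + α * (-(f a * Real.log (f a)))) := by
          simp [Finset.sum_add_distrib, Finset.sum_sub_distrib, Finset.mul_sum]
      _ = ∑ a, ((β + α) * Real.log Z * f a - (β + α) * (f a * Real.log (f a / p a))) := by
          exact Finset.sum_congr rfl fun a _ => hterm a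
      _ = (β + α) * Real.log Z - (β + α) * ∑ a, f a * Real.log (f a / p a) := by
          rw [Finset.sum_sub_distrib, ← Finset.mul_sum, hf1, mul_one, ← Finset.mul_sum]
  have hKLp : ∑ a, p a * Real.log (p a / p a) = 0 := by
    apply Finset.sum_eq_zero
    intro a _
    rw [div_self (hp_pos a).ne', Real.log_one, mul_zero]
  have hKLq : 0 ≤ ∑ a, q a * Real.log (q a / p a) := by
    have : ∑ a, (q a - p a) ≤ ∑ a, q a * Real.log (q a / p a) :=
      Finset.sum_le_sum fun a _ => kl_term_lb (q a) (p a) (hq0 a) (hp_pos a)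
    rwa [Finset.sum_sub_distrib, hq1, hp_sum, sub_self] at this
  rw [key q hq0 hq1, key p (fun a => (hp_pos a).le) hp_sum, hKLp, mul_zero, sub_zero]
  nlinarith
end

section
/- For all x ∈ [0,1] and η > 0, the inequality x² ≤ ln(1 + η⁻²·x²) / ln(1 + η⁻²) holds. -/
/-- For `x ∈ [0,1]` and `η > 0`, `x² ≤ ln(1 + η⁻²x²) / ln(1 + η⁻²)`. -/
theorem sq_le_log_ratio (η x : ℝ) (hη : 0 < η) (hx : x ∈ Set.Icc (0:ℝ) 1) :
    x ^ 2 ≤ Real.log (1 + x ^ 2 / η ^ 2) / Real.log (1 + 1 / η ^ 2) := by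
  obtain ⟨hx0, hx1⟩ := hx
  have hη2 : 0 < 1 / η ^ 2 := by positivity
  have hlogpos : 0 < Real.log (1 + 1 / η ^ 2) := Real.log_pos (by linarith)
  rw [le_div_iff₀ hlogpos]
  have hp1 : 0 ≤ x ^ 2 := by positivity
  have hp2 : x ^ 2 ≤ 1 := by nlinarith
  have hb := rpow_one_add_le_one_add_mul_self (s := 1 / η ^ 2)
    (by linarith) hp1 hp2
  have h1 : (0:ℝ) < 1 + 1 / η ^ 2 := by linarith
  calc x ^ 2 * Real.log (1 + 1 / η ^ 2)
      = Real.log ((1 + 1 / η ^ 2) ^ (x ^ 2 : ℝ)) := by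
        rw [Real.log_rpow h1]
    _ ≤ Real.log (1 + x ^ 2 * (1 / η ^ 2)) := by
        apply Real.log_le_log (Real.rpow_pos_of_pos h1 _) hb
    _ = Real.log (1 + x ^ 2 / η ^ 2) := by ring_nf
end

section
/- Let r = (r₁, …, r_n) be a random vector with means μ_j = E[r_j] and suppose each r_j − μ_j is σ_j-subgaussian where σ = (σ₁,…,σ_n) may itself be random but measurable with respect to a sigma-algebra conditioning on which the subgaussianity holds. Let X be a random index in {1,…,n} with arbitrary dependence on r. Then E[|r_X − μ_X|] ≤ sqrt(E[σ_X²] · (2 log(2n) + 2)). -/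
/-!
With `Z_j = (r_j - m_j) / σ_j`, pointwise `|r_X - m_X| = σ_X |Z_X| ≤ σ_X √(max_j Z_j²)` whatever the
index `X` is, so Cauchy–Schwarz gives `E|r_X - m_X| ≤ √(E[σ_X²] E[max_j Z_j²])`. The two-sided
Chernoff bound and a union bound over `j` give `P(max_j Z_j² > t) ≤ 2n e^{-t/2}`; integrating this
tail, bounded by `1` up to `t = 2 log(2n)`, yields `E[max_j Z_j²] ≤ 2 log(2n) + 2`.
-/

open MeasureTheory BigOperators
open Real Set
open scoped NNReal

lemma integrableOn_exp_neg_div_Ioi {b : ℝ} (hb : 0 < b) (a : ℝ) :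
    IntegrableOn (fun t => exp (-t / b)) (Ioi a) := by
  simpa only [neg_mul, ← div_eq_inv_mul, neg_div] using
    integrableOn_exp_mul_Ioi (neg_lt_zero.2 (inv_pos.2 hb)) a

lemma integral_exp_neg_div_Ioi {b : ℝ} (hb : 0 < b) (a : ℝ) :
    ∫ t in Ioi a, exp (-t / b) = b * exp (-a / b) := by
  have h (t : ℝ) : -t / b = -b⁻¹ * t := by ring
  simp_rw [h, integral_exp_mul_Ioi (neg_lt_zero.2 (inv_pos.2 hb))]
  field_simp

namespace MeasureTheory

variable {Ω : Type*} [MeasurableSpace Ω] {μ : Measure Ω}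

/-- The layer-cake integral is split at `b log C`, beyond which the tail bound drops below `1`. -/
lemma integral_le_of_measureReal_lt_le_mul_exp [IsProbabilityMeasure μ] {W : Ω → ℝ}
    (hW : Integrable W μ) (hW0 : 0 ≤ᵐ[μ] W) {C b : ℝ} (hC : 1 ≤ C) (hb : 0 < b)
    (htail : ∀ t, 0 < t → μ.real {ω | t < W ω} ≤ C * exp (-t / b)) :
    ∫ ω, W ω ∂μ ≤ b * (log C + 1) := by
  set F : ℝ → ℝ := fun t => μ.real {ω | t < W ω}
  set a := b * log C
  have ha : 0 ≤ a := mul_nonneg hb.le (log_nonneg hC)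
  have hF_anti : Antitone F := fun s t hst => measureReal_mono fun ω hω => hst.trans_lt hω
  have hF_nonneg (t : ℝ) : 0 ≤ F t := measureReal_nonneg
  have hF_one (t : ℝ) : F t ≤ 1 := measureReal_le_one
  have hF_tail : ∀ t ∈ Ioi a, F t ≤ C * exp (-t / b) := fun t ht => htail t (ha.trans_lt ht)
  have hexp : IntegrableOn (fun t => C * exp (-t / b)) (Ioi a) :=
    (integrableOn_exp_neg_div_Ioi hb a).const_mul C
  have hF_Ioc : IntegrableOn F (Ioc 0 a) :=
    (integrableOn_const (C := (1 : ℝ)) measure_Ioc_lt_top.ne).mono'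
      hF_anti.measurable.aestronglyMeasurable
      (ae_of_all _ fun t => by rw [norm_of_nonneg (hF_nonneg t)]; exact hF_one t)
  have hF_Ioi : IntegrableOn F (Ioi a) :=
    hexp.mono' hF_anti.measurable.aestronglyMeasurable <| (ae_restrict_iff' measurableSet_Ioi).2 <|
      ae_of_all _ fun t ht => by rw [norm_of_nonneg (hF_nonneg t)]; exact hF_tail t ht
  calc ∫ ω, W ω ∂μ = ∫ t in Ioi 0, F t := hW.integral_eq_integral_meas_lt hW0
    _ = (∫ t in Ioc 0 a, F t) + ∫ t in Ioi a, F t := by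
      rw [← Ioc_union_Ioi_eq_Ioi ha,
        setIntegral_union Ioc_disjoint_Ioi_same measurableSet_Ioi hF_Ioc hF_Ioi]
    _ ≤ (∫ t in Ioc 0 a, (1 : ℝ)) + ∫ t in Ioi a, C * exp (-t / b) := add_le_add
      (setIntegral_mono_on hF_Ioc (integrableOn_const measure_Ioc_lt_top.ne) measurableSet_Ioc
        fun t _ => hF_one t)
      (setIntegral_mono_on hF_Ioi hexp measurableSet_Ioi hF_tail)
    _ = a + b := by
      rw [setIntegral_const, Real.volume_real_Ioc_of_le ha, integral_const_mul,
        integral_exp_neg_div_Ioi hb, neg_div, mul_div_cancel_left₀ _ hb.ne', exp_neg,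
        exp_log (by linarith)]
      field_simp
      ring
    _ = b * (log C + 1) := by ring

lemma integral_mul_le_sqrt_mul_sqrt {f g : Ω → ℝ} (hf : MemLp f 2 μ) (hg : MemLp g 2 μ)
    (hf0 : 0 ≤ᵐ[μ] f) (hg0 : 0 ≤ᵐ[μ] g) :
    ∫ ω, f ω * g ω ∂μ ≤ √(∫ ω, f ω ^ 2 ∂μ) * √(∫ ω, g ω ^ 2 ∂μ) := by
  simpa [sqrt_eq_rpow] using
    integral_mul_le_Lp_mul_Lq_of_nonneg Real.HolderConjugate.two_two hf0 hg0
      (by simpa using hf) (by simpa using hg)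

lemma integral_abs_le_sqrt_of_abs_le_mul_sqrt {f S W : Ω → ℝ} (hS : MemLp S 2 μ)
    (hW : Integrable W μ) (hS0 : ∀ ω, 0 ≤ S ω) (hW0 : ∀ ω, 0 ≤ W ω)
    (hf : ∀ ω, |f ω| ≤ S ω * √(W ω)) :
    ∫ ω, |f ω| ∂μ ≤ √((∫ ω, S ω ^ 2 ∂μ) * ∫ ω, W ω ∂μ) := by
  have hsqrtW : MemLp (fun ω => √(W ω)) 2 μ :=
    (memLp_two_iff_integrable_sq (continuous_sqrt.comp_aestronglyMeasurable
      hW.aestronglyMeasurable)).2 (hW.congr (ae_of_all _ fun ω => (sq_sqrt (hW0 ω)).symm))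
  calc ∫ ω, |f ω| ∂μ ≤ ∫ ω, S ω * √(W ω) ∂μ :=
        integral_mono_of_nonneg (ae_of_all _ fun ω => abs_nonneg _) (hS.integrable_mul hsqrtW)
          (ae_of_all _ hf)
    _ ≤ √(∫ ω, S ω ^ 2 ∂μ) * √(∫ ω, √(W ω) ^ 2 ∂μ) :=
        integral_mul_le_sqrt_mul_sqrt hS hsqrtW (ae_of_all _ hS0)
          (ae_of_all _ fun ω => sqrt_nonneg _)
    _ = √((∫ ω, S ω ^ 2 ∂μ) * ∫ ω, W ω ∂μ) := by
        simp_rw [sq_sqrt (hW0 _)]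
        rw [sqrt_mul (integral_nonneg fun ω => sq_nonneg _)]

end MeasureTheory

namespace ProbabilityTheory

variable {Ω : Type*} [MeasurableSpace Ω] {μ : Measure Ω}

lemma HasSubgaussianMGF.measureReal_lt_sq_le [IsFiniteMeasure μ] {X : Ω → ℝ} {c : ℝ≥0}
    (h : HasSubgaussianMGF X c μ) {t : ℝ} (ht : 0 ≤ t) :
    μ.real {ω | t < X ω ^ 2} ≤ 2 * exp (-t / (2 * c)) := by
  have hsub : {ω | t < X ω ^ 2} ⊆ {ω | √t ≤ X ω} ∪ {ω | √t ≤ (-X) ω} := by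
    intro ω (hω : t < X ω ^ 2)
    exact le_abs.1 (sqrt_sq_eq_abs (X ω) ▸ sqrt_le_sqrt hω.le)
  calc μ.real {ω | t < X ω ^ 2}
      ≤ μ.real {ω | √t ≤ X ω} + μ.real {ω | √t ≤ (-X) ω} :=
        (measureReal_mono hsub).trans (measureReal_union_le _ _)
    _ ≤ exp (-√t ^ 2 / (2 * c)) + exp (-√t ^ 2 / (2 * c)) :=
        add_le_add (h.measure_ge_le (sqrt_nonneg t)) (h.neg.measure_ge_le (sqrt_nonneg t))
    _ = 2 * exp (-t / (2 * c)) := by rw [sq_sqrt ht]; ring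

variable {ι : Type*} [Fintype ι] [Nonempty ι] {X : ι → Ω → ℝ}

lemma integrable_iSup_sq_of_hasSubgaussianMGF {c : ι → ℝ≥0}
    (h : ∀ i, HasSubgaussianMGF (X i) (c i) μ) : Integrable (fun ω => ⨆ i, X i ω ^ 2) μ := by
  refine (integrable_finsetSum Finset.univ fun i _ => ((h i).memLp 2).integrable_sq).mono'
    (AEMeasurable.iSup fun i => (h i).aemeasurable.pow_const 2).aestronglyMeasurable
    (ae_of_all _ fun ω => ?_)
  rw [norm_of_nonneg (Real.iSup_nonneg fun i => sq_nonneg _)]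
  exact ciSup_le fun i => Finset.single_le_sum (f := fun i => X i ω ^ 2)
    (fun i _ => sq_nonneg _) (Finset.mem_univ i)

lemma integral_iSup_sq_le_of_hasSubgaussianMGF [IsProbabilityMeasure μ] {c : ℝ≥0} (hc : 0 < c)
    (h : ∀ i, HasSubgaussianMGF (X i) c μ) :
    ∫ ω, ⨆ i, X i ω ^ 2 ∂μ ≤ 2 * c * (log (2 * Fintype.card ι) + 1) := by
  have hcard : (1 : ℝ) ≤ 2 * Fintype.card ι := by
    have := Fintype.card_pos (α := ι)
    norm_cast
    omega
  refine integral_le_of_measureReal_lt_le_mul_exp (integrable_iSup_sq_of_hasSubgaussianMGF h)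
    (ae_of_all _ fun ω => Real.iSup_nonneg fun i => sq_nonneg _) hcard (by positivity)
    fun t ht => ?_
  calc μ.real {ω | t < ⨆ i, X i ω ^ 2}
      ≤ μ.real (⋃ i, {ω | t < X i ω ^ 2}) :=
        measureReal_mono fun ω (hω : t < ⨆ i, X i ω ^ 2) =>
          mem_iUnion.2 (exists_lt_of_lt_ciSup hω)
    _ ≤ ∑ i, μ.real {ω | t < X i ω ^ 2} := measureReal_iUnion_fintype_le _
    _ ≤ ∑ _i : ι, 2 * exp (-t / (2 * c)) :=
        Finset.sum_le_sum fun i _ => (h i).measureReal_lt_sq_le ht.le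
    _ = 2 * Fintype.card ι * exp (-t / (2 * c)) := by
        rw [Finset.sum_const, Finset.card_univ, nsmul_eq_mul]
        ring

end ProbabilityTheory

open ProbabilityTheory

theorem expectation_abs_dev_random_index_general
    {Ω : Type*} [MeasurableSpace Ω] (μ : Measure Ω) [IsProbabilityMeasure μ]
    (n : ℕ)
    (r σr : Fin n → Ω → ℝ) (m : Fin n → ℝ) (X : Ω → Fin n)
    (hσpos : ∀ j ω, 0 < σr j ω)
    (hint : ∀ (j : Fin n) (l : ℝ),
      Integrable (fun ω => Real.exp (l * ((r j ω - m j) / σr j ω))) μ)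
    (hsg : ∀ (j : Fin n) (l : ℝ),
      ∫ ω, Real.exp (l * ((r j ω - m j) / σr j ω)) ∂μ ≤ Real.exp (l ^ 2 / 2))
    (hσint : Integrable (fun ω => (σr (X ω) ω) ^ 2) μ) :
    ∫ ω, |r (X ω) ω - m (X ω)| ∂μ
      ≤ Real.sqrt ((∫ ω, (σr (X ω) ω) ^ 2 ∂μ) * (2 * Real.log (2 * n) + 2)) := by
  have : Nonempty (Fin n) := (nonempty_of_isProbabilityMeasure μ).map X
  set Z : Fin n → Ω → ℝ := fun j ω => (r j ω - m j) / σr j ω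
  have hZ (j : Fin n) : HasSubgaussianMGF (Z j) 1 μ :=
    ⟨hint j, fun l => by simpa [mgf] using hsg j l⟩
  have hσ : AEStronglyMeasurable (fun ω => σr (X ω) ω) μ :=
    (continuous_sqrt.comp_aestronglyMeasurable hσint.aestronglyMeasurable).congr
      (ae_of_all _ fun ω => sqrt_sq (hσpos _ ω).le)
  have hdev (ω : Ω) : |r (X ω) ω - m (X ω)| ≤ σr (X ω) ω * √(⨆ j, Z j ω ^ 2) := by
    have hpos := hσpos (X ω) ω
    calc |r (X ω) ω - m (X ω)| = σr (X ω) ω * |Z (X ω) ω| := by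
          simp only [Z, abs_div, abs_of_pos hpos]
          field_simp
      _ ≤ σr (X ω) ω * √(⨆ j, Z j ω ^ 2) := by
          gcongr
          rw [← sqrt_sq_eq_abs]
          exact sqrt_le_sqrt (le_ciSup (f := fun j => Z j ω ^ 2) (Finite.bddAbove_range _) (X ω))
  calc ∫ ω, |r (X ω) ω - m (X ω)| ∂μ
      ≤ √((∫ ω, σr (X ω) ω ^ 2 ∂μ) * ∫ ω, ⨆ j, Z j ω ^ 2 ∂μ) :=
        integral_abs_le_sqrt_of_abs_le_mul_sqrt ((memLp_two_iff_integrable_sq hσ).2 hσint)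
          (integrable_iSup_sq_of_hasSubgaussianMGF hZ) (fun ω => (hσpos _ ω).le)
          (fun ω => Real.iSup_nonneg fun j => sq_nonneg _) hdev
    _ ≤ √((∫ ω, σr (X ω) ω ^ 2 ∂μ) * (2 * log (2 * n) + 2)) := by
        gcongr
        simpa [mul_add] using integral_iSup_sq_le_of_hasSubgaussianMGF one_pos hZ

/-- If each standardized deviation `(r_j − μ_j)/σ_j` is 1-subgaussian and `X` is an
arbitrary random index, then `E[|r_X − μ_X|] ≤ sqrt(E[σ_X²]·(2 log(2n) + 2))`. -/
theorem expectation_abs_dev_random_index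
    {Ω : Type*} [MeasurableSpace Ω] (μ : Measure Ω) [IsProbabilityMeasure μ]
    (n : ℕ) (hn : 1 ≤ n)
    (r σr : Fin n → Ω → ℝ) (m : Fin n → ℝ) (X : Ω → Fin n)
    (hrm : ∀ j, Measurable (r j)) (hσm : ∀ j, Measurable (σr j))
    (hXm : Measurable X)
    (hσpos : ∀ j ω, 0 < σr j ω)
    (hm : ∀ j, m j = ∫ ω, r j ω ∂μ)
    (hint : ∀ (j : Fin n) (l : ℝ),
      Integrable (fun ω => Real.exp (l * ((r j ω - m j) / σr j ω))) μ)
    (hsg : ∀ (j : Fin n) (l : ℝ),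
      ∫ ω, Real.exp (l * ((r j ω - m j) / σr j ω)) ∂μ ≤ Real.exp (l ^ 2 / 2))
    (hσint : Integrable (fun ω => (σr (X ω) ω) ^ 2) μ) :
    ∫ ω, |r (X ω) ω - m (X ω)| ∂μ
      ≤ Real.sqrt ((∫ ω, (σr (X ω) ω) ^ 2 ∂μ) * (2 * Real.log (2 * n) + 2)) :=
  expectation_abs_dev_random_index_general μ n r σr m X hσpos hint hsg hσint
end

section
/- Let r and r' be i.i.d. random vectors in ℝ^n whose components r_j − μ_j are σ_j-subgaussian, and let X ∈ {1,…,n} be a random index depending only on r (independent of r'). Then E[|r_X − r'_X|] ≤ (1 + sqrt(2 log(2n) + 2)) · sqrt(E[σ_X²]). -/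
/-!
Write `Z_j = (r_j - m_j) / σ_j`, so that `r_X - r'_X = σ_X (Z_X - Z'_X)` and, by Cauchy–Schwarz,
`E|r_X - r'_X| ≤ √(E σ_X²) (√(E Z_X²) + √(E Z'_X²))`. Each `Z_j` is `1`-subgaussian, so a union
bound gives `P(Z_X² > t) ≤ min(1, 2n e^{-t/2})`, and integrating this tail with the cut-off at
`t = 2 log(2n)` yields `E Z_X² ≤ 2 log(2n) + 2`. As `X` depends only on `r`, it is independent of
`r'`, so `E Z'_X² = Σ_j P(X = j) E Z'_j² ≤ 1`: the second moment of a `1`-subgaussian variable is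
at most `1`, by comparing `E cosh(tZ) ≥ 1 + t² E Z² / 2` with `e^{t²/2}` as `t → 0`.
-/

open MeasureTheory ProbabilityTheory Real Set Filter
open scoped ENNReal NNReal Topology

lemma one_add_sq_div_two_le_cosh (x : ℝ) : 1 + x ^ 2 / 2 ≤ cosh x := by
  have hcosh := cosh_two_mul (x / 2)
  rw [mul_div_cancel₀ x two_ne_zero, cosh_sq] at hcosh
  have hsinh : (x / 2) ^ 2 ≤ sinh (x / 2) ^ 2 := by
    rw [sq_le_sq, abs_sinh]
    exact self_le_sinh_iff.mpr (abs_nonneg _)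
  linarith

lemma le_of_forall_mul_le_exp_sub_one {a c : ℝ} (h : ∀ u > 0, a * u ≤ exp (c * u) - 1) :
    a ≤ c := by
  have hderiv : HasDerivAt (fun u => exp (c * u)) c 0 := by
    simpa using ((hasDerivAt_id (0 : ℝ)).const_mul c).exp
  have hslope : Tendsto (fun u => (exp (c * u) - 1) / u) (𝓝[>] 0) (𝓝 c) := by
    have := (hasDerivAt_iff_tendsto_slope.mp hderiv).mono_left
      (nhdsWithin_mono _ fun u hu => (mem_Ioi.mp hu).ne')
    simpa [slope_fun_def_field] using this
  refine ge_of_tendsto hslope ?_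
  filter_upwards [self_mem_nhdsWithin] with u hu
  rw [le_div_iff₀ hu]
  exact h u hu

lemma setLIntegral_Ioi_le_two_mul_log_add_two {G : ℝ → ℝ≥0∞} {A : ℝ} (hA : 1 ≤ A)
    (hG_le_one : ∀ t, G t ≤ 1) (hG : ∀ t > 0, G t ≤ ENNReal.ofReal (A * exp (-t / 2))) :
    ∫⁻ t in Ioi 0, G t ≤ ENNReal.ofReal (2 * log A + 2) := by
  set a := 2 * log A
  have ha : 0 ≤ a := by have := log_nonneg hA; positivity
  rw [← Ioc_union_Ioi_eq_Ioi ha, lintegral_union measurableSet_Ioi (Ioc_disjoint_Ioi le_rfl),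
    ENNReal.ofReal_add ha zero_le_two]
  gcongr
  · calc ∫⁻ t in Ioc 0 a, G t ≤ ∫⁻ _ in Ioc 0 a, 1 := lintegral_mono hG_le_one
      _ = ENNReal.ofReal a := by rw [setLIntegral_one, volume_Ioc, sub_zero]
  · have hint : IntegrableOn (fun t => A * exp (-1 / 2 * t)) (Ioi a) :=
      (integrableOn_exp_mul_Ioi (by norm_num) a).const_mul A
    calc ∫⁻ t in Ioi a, G t ≤ ∫⁻ t in Ioi a, ENNReal.ofReal (A * exp (-1 / 2 * t)) :=
          setLIntegral_mono' measurableSet_Ioi fun t ht => by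
            convert hG t (ha.trans_lt ht) using 4
            ring
      _ = ENNReal.ofReal (∫ t in Ioi a, A * exp (-1 / 2 * t)) :=
          (ofReal_integral_eq_lintegral_ofReal hint (ae_of_all _ fun t => by positivity)).symm
      _ = ENNReal.ofReal 2 := by
          -- the cut-off `a = 2 log A` is where the tail bound `A exp (-t / 2)` drops to `1`
          rw [integral_const_mul, integral_exp_mul_Ioi (by norm_num),
            show -1 / 2 * a = -log A by ring, exp_neg, exp_log (by linarith)]
          field_simp

section

variable {Ω : Type*} [MeasurableSpace Ω] {μ : Measure Ω}

lemma hasSubgaussianMGF_div_of_integral_exp_le {Y : Ω → ℝ} {s : ℝ} (hs : s ≠ 0)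
    (hint : ∀ l : ℝ, Integrable (fun ω => exp (l * Y ω)) μ)
    (hmgf : ∀ l : ℝ, ∫ ω, exp (l * Y ω) ∂μ ≤ exp (l ^ 2 * s ^ 2 / 2)) :
    HasSubgaussianMGF (fun ω => Y ω / s) 1 μ := by
  have hrescale : ∀ t ω, t * (Y ω / s) = t / s * Y ω := fun t ω => by ring
  refine ⟨fun t => ?_, fun t => ?_⟩
  · simpa only [hrescale] using hint (t / s)
  · rw [mgf]
    simp only [hrescale]
    convert hmgf (t / s) using 2
    push_cast
    field_simp

namespace ProbabilityTheory.HasSubgaussianMGF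

variable {X : Ω → ℝ} {c : ℝ≥0}

lemma integrable_cosh_mul (h : HasSubgaussianMGF X c μ) (t : ℝ) :
    Integrable (fun ω => cosh (t * X ω)) μ := by
  have hneg := h.integrable_exp_mul (-t)
  simp only [neg_mul] at hneg
  simp only [cosh_eq]
  exact ((h.integrable_exp_mul t).add hneg).div_const 2

lemma integral_cosh_mul_le (h : HasSubgaussianMGF X c μ) (t : ℝ) :
    ∫ ω, cosh (t * X ω) ∂μ ≤ exp (c * t ^ 2 / 2) := by
  have hpos := h.mgf_le t
  have hneg := h.mgf_le (-t)
  have hneg_int := h.integrable_exp_mul (-t)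
  simp only [mgf, neg_mul, neg_sq] at hpos hneg hneg_int
  simp only [cosh_eq]
  rw [integral_div, integral_add (h.integrable_exp_mul t) hneg_int]
  linarith

lemma integral_sq_le [IsProbabilityMeasure μ] (h : HasSubgaussianMGF X c μ) :
    ∫ ω, X ω ^ 2 ∂μ ≤ c := by
  refine le_of_forall_mul_le_exp_sub_one fun u hu => ?_
  set t := √(2 * u)
  have ht : t ^ 2 = 2 * u := sq_sqrt (by positivity)
  have hcosh : ∀ ω, 1 + u * X ω ^ 2 ≤ cosh (t * X ω) := fun ω => by
    convert one_add_sq_div_two_le_cosh (t * X ω) using 2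
    rw [mul_pow, ht]
    ring
  have hsq := (h.memLp 2).integrable_sq
  calc (∫ ω, X ω ^ 2 ∂μ) * u = ∫ ω, (1 + u * X ω ^ 2) ∂μ - 1 := by
        rw [integral_add (integrable_const 1) (hsq.const_mul u), integral_const_mul]
        simp only [integral_const, probReal_univ, smul_eq_mul, one_mul]
        ring
    _ ≤ ∫ ω, cosh (t * X ω) ∂μ - 1 :=
        sub_le_sub_right (integral_mono ((integrable_const 1).add (hsq.const_mul u))
          (h.integrable_cosh_mul t) hcosh) 1
    _ ≤ exp (c * u) - 1 := by
        gcongr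
        convert h.integral_cosh_mul_le t using 2
        rw [ht]
        ring

lemma measure_abs_ge_le [IsFiniteMeasure μ] (h : HasSubgaussianMGF X c μ) {ε : ℝ} (hε : 0 ≤ ε) :
    μ {ω | ε ≤ |X ω|} ≤ ENNReal.ofReal (2 * exp (-ε ^ 2 / (2 * c))) :=
  calc μ {ω | ε ≤ |X ω|} ≤ μ ({ω | ε ≤ X ω} ∪ {ω | ε ≤ (-X) ω}) :=
        measure_mono fun ω (hω : ε ≤ |X ω|) => le_abs.mp hω
    _ ≤ μ {ω | ε ≤ X ω} + μ {ω | ε ≤ (-X) ω} := measure_union_le _ _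
    _ = ENNReal.ofReal (μ.real {ω | ε ≤ X ω}) + ENNReal.ofReal (μ.real {ω | ε ≤ (-X) ω}) := by
        rw [ofReal_measureReal, ofReal_measureReal]
    _ ≤ ENNReal.ofReal (exp (-ε ^ 2 / (2 * c))) + ENNReal.ofReal (exp (-ε ^ 2 / (2 * c))) := by
        gcongr
        exacts [h.measure_ge_le hε, h.neg.measure_ge_le hε]
    _ = ENNReal.ofReal (2 * exp (-ε ^ 2 / (2 * c))) := by
        rw [← ENNReal.ofReal_add (by positivity) (by positivity)]
        ring_nf

end ProbabilityTheory.HasSubgaussianMGF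

variable {ι : Type*} [Fintype ι]

lemma measure_lt_sq_comp_index_le [IsFiniteMeasure μ] {Z : ι → Ω → ℝ}
    (hZ : ∀ i, HasSubgaussianMGF (Z i) 1 μ) (I : Ω → ι) {t : ℝ} (ht : 0 < t) :
    μ {ω | t < Z (I ω) ω ^ 2} ≤ ENNReal.ofReal (2 * Fintype.card ι * exp (-t / 2)) :=
  calc μ {ω | t < Z (I ω) ω ^ 2} ≤ μ (⋃ i, {ω | √t ≤ |Z i ω|}) :=
        measure_mono fun ω (hω : t < Z (I ω) ω ^ 2) => mem_iUnion.2
          ⟨I ω, show √t ≤ |Z (I ω) ω| from sqrt_sq_eq_abs (Z (I ω) ω) ▸ sqrt_le_sqrt hω.le⟩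
    _ ≤ ∑ i, μ {ω | √t ≤ |Z i ω|} := measure_iUnion_fintype_le _ _
    _ ≤ ∑ _i : ι, ENNReal.ofReal (2 * exp (-t / 2)) := Finset.sum_le_sum fun i _ => by
        simpa [sq_sqrt ht.le] using (hZ i).measure_abs_ge_le (sqrt_nonneg t)
    _ = ENNReal.ofReal (2 * Fintype.card ι * exp (-t / 2)) := by
        rw [Finset.sum_const, Finset.card_univ, nsmul_eq_mul, ← ENNReal.ofReal_natCast,
          ← ENNReal.ofReal_mul (Nat.cast_nonneg _)]
        ring_nf

variable [MeasurableSpace ι] [MeasurableSingletonClass ι]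

lemma memLp_comp_index {E : Type*} [NormedAddCommGroup E] {p : ℝ≥0∞} {Z : ι → Ω → E}
    (hZ : ∀ i, MemLp (Z i) p μ) {I : Ω → ι} (hI : Measurable I) :
    MemLp (fun ω => Z (I ω) ω) p μ := by
  have hsum : (fun ω => Z (I ω) ω) = ∑ i, (I ⁻¹' {i}).indicator (Z i) := by
    ext ω
    rw [Finset.sum_apply, Finset.sum_eq_single_of_mem (I ω) (Finset.mem_univ _)]
    · exact (indicator_of_mem (show ω ∈ I ⁻¹' {I ω} from rfl) _).symm
    · exact fun i _ hi => indicator_of_notMem (show ω ∉ I ⁻¹' {i} from fun h => hi h.symm) _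
  rw [hsum]
  exact memLp_finsetSum' _ fun i _ => (hZ i).indicator (hI (measurableSet_singleton i))

lemma integral_sq_comp_index_le_two_mul_log_add_two [IsProbabilityMeasure μ] [Nonempty ι]
    {Z : ι → Ω → ℝ} (hZ : ∀ i, HasSubgaussianMGF (Z i) 1 μ) {I : Ω → ι} (hI : Measurable I) :
    ∫ ω, Z (I ω) ω ^ 2 ∂μ ≤ 2 * log (2 * Fintype.card ι) + 2 := by
  have hA : (1 : ℝ) ≤ 2 * Fintype.card ι := by
    have : (1 : ℝ) ≤ Fintype.card ι := by exact_mod_cast Fintype.card_pos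
    linarith
  have hL2 : MemLp (fun ω => Z (I ω) ω) 2 μ := memLp_comp_index (fun i => (hZ i).memLp 2) hI
  have hsq_nonneg : 0 ≤ᵐ[μ] fun ω => Z (I ω) ω ^ 2 := ae_of_all _ fun ω => sq_nonneg _
  rw [← ENNReal.ofReal_le_ofReal_iff (by have := log_nonneg hA; positivity),
    ofReal_integral_eq_lintegral_ofReal hL2.integrable_sq hsq_nonneg,
    lintegral_eq_lintegral_meas_lt μ hsq_nonneg (hL2.aestronglyMeasurable.aemeasurable.pow_const 2)]
  exact setLIntegral_Ioi_le_two_mul_log_add_two hA (fun _ => prob_le_one)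
    fun t ht => measure_lt_sq_comp_index_le hZ I ht

lemma lintegral_comp_index_le_of_indepFun [IsProbabilityMeasure μ] {β : Type*} [MeasurableSpace β]
    {I : Ω → ι} {V : Ω → β} (hI : Measurable I) (hV : Measurable V) (hIV : IndepFun I V μ)
    {F : ι → β → ℝ≥0∞} (hF : ∀ i, Measurable (F i)) {C : ℝ≥0∞}
    (hC : ∀ i, ∫⁻ ω, F i (V ω) ∂μ ≤ C) :
    ∫⁻ ω, F (I ω) (V ω) ∂μ ≤ C := by
  have hF' : Measurable fun p : ι × β => F p.1 p.2 := measurable_from_prod_countable_right hF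
  have hlaw := (indepFun_iff_map_prod_eq_prod_map_map hI.aemeasurable hV.aemeasurable).1 hIV
  calc ∫⁻ ω, F (I ω) (V ω) ∂μ = ∫⁻ p, F p.1 p.2 ∂(μ.map I).prod (μ.map V) := by
        rw [← hlaw, lintegral_map hF' (hI.prodMk hV)]
    _ = ∫⁻ i, ∫⁻ ω, F i (V ω) ∂μ ∂μ.map I := by
        rw [lintegral_prod _ hF'.aemeasurable]
        simp_rw [lintegral_map (hF _) hV]
    _ ≤ ∫⁻ _, C ∂μ.map I := lintegral_mono hC
    _ = C := by simp [Measure.map_apply hI MeasurableSet.univ]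

lemma integral_sq_comp_index_le_of_indepFun [IsProbabilityMeasure μ] {β : Type*}
    [MeasurableSpace β] {I : Ω → ι} {V : Ω → β} (hI : Measurable I) (hV : Measurable V)
    (hIV : IndepFun I V μ) {Z : ι → β → ℝ} (hZ : ∀ i, Measurable (Z i))
    (hZV : ∀ i, HasSubgaussianMGF (fun ω => Z i (V ω)) 1 μ) :
    ∫ ω, Z (I ω) (V ω) ^ 2 ∂μ ≤ 1 := by
  have hL2 : MemLp (fun ω => Z (I ω) (V ω)) 2 μ :=
    memLp_comp_index (Z := fun i ω => Z i (V ω)) (fun i => (hZV i).memLp 2) hI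
  rw [← ENNReal.ofReal_le_ofReal_iff zero_le_one,
    ofReal_integral_eq_lintegral_ofReal hL2.integrable_sq (ae_of_all _ fun ω => sq_nonneg _),
    ENNReal.ofReal_one]
  refine lintegral_comp_index_le_of_indepFun (F := fun i v => ENNReal.ofReal (Z i v ^ 2))
    hI hV hIV (fun i => by fun_prop) fun i => ?_
  rw [← ofReal_integral_eq_lintegral_ofReal ((hZV i).memLp 2).integrable_sq
    (ae_of_all _ fun ω => sq_nonneg _), ← ENNReal.ofReal_one]
  exact ENNReal.ofReal_le_ofReal (by simpa using (hZV i).integral_sq_le)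

lemma integral_abs_mul_le_sqrt_mul_sqrt {f g : Ω → ℝ} (hf : MemLp f 2 μ) (hg : MemLp g 2 μ) :
    ∫ ω, |f ω * g ω| ∂μ ≤ √(∫ ω, f ω ^ 2 ∂μ) * √(∫ ω, g ω ^ 2 ∂μ) := by
  have := integral_mul_le_Lp_mul_Lq_of_nonneg HolderConjugate.two_two
    (ae_of_all _ fun ω => abs_nonneg (f ω)) (ae_of_all _ fun ω => abs_nonneg (g ω))
    (by simpa using hf.norm) (by simpa using hg.norm)
  simpa only [abs_mul, rpow_two, sq_abs, sqrt_eq_rpow] using this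

lemma integral_abs_mul_sub_le {w U V : Ω → ℝ} (hw : MemLp w 2 μ) (hU : MemLp U 2 μ)
    (hV : MemLp V 2 μ) :
    ∫ ω, |w ω * (U ω - V ω)| ∂μ
      ≤ √(∫ ω, w ω ^ 2 ∂μ) * (√(∫ ω, U ω ^ 2 ∂μ) + √(∫ ω, V ω ^ 2 ∂μ)) := by
  have hwU := (hw.integrable_mul hU).abs
  have hwV := (hw.integrable_mul hV).abs
  calc ∫ ω, |w ω * (U ω - V ω)| ∂μ ≤ ∫ ω, (|w ω * U ω| + |w ω * V ω|) ∂μ :=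
        integral_mono_of_nonneg (ae_of_all _ fun ω => abs_nonneg _) (hwU.add hwV)
          (ae_of_all _ fun ω => by simpa only [mul_sub] using abs_sub _ _)
    _ = ∫ ω, |w ω * U ω| ∂μ + ∫ ω, |w ω * V ω| ∂μ := integral_add hwU hwV
    _ ≤ _ := by
        rw [mul_add]
        gcongr <;> exact integral_abs_mul_le_sqrt_mul_sqrt hw ‹_›

end

theorem expectation_abs_diff_iid_random_index_general
    {Ω : Type*} [MeasurableSpace Ω] (μ : Measure Ω) [IsProbabilityMeasure μ]
    (n : ℕ)
    (r r' : Ω → Fin n → ℝ) (σ m : Fin n → ℝ)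
    (hr : Measurable r) (hr' : Measurable r')
    (hσpos : ∀ j, 0 < σ j)
    (hindep : ProbabilityTheory.IndepFun r r' μ)
    (hiid : Measure.map r μ = Measure.map r' μ)
    (g : (Fin n → ℝ) → Fin n) (hg : Measurable g)
    (hint : ∀ (j : Fin n) (l : ℝ),
      Integrable (fun ω => Real.exp (l * (r ω j - m j))) μ)
    (hsg : ∀ (j : Fin n) (l : ℝ),
      ∫ ω, Real.exp (l * (r ω j - m j)) ∂μ ≤ Real.exp (l ^ 2 * σ j ^ 2 / 2)) :
    ∫ ω, |r ω (g (r ω)) - r' ω (g (r ω))| ∂μ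
      ≤ (1 + Real.sqrt (2 * Real.log (2 * n) + 2)) *
          Real.sqrt (∫ ω, (σ (g (r ω))) ^ 2 ∂μ) := by
  have : Nonempty (Fin n) := ⟨g 0⟩
  have hX : Measurable fun ω => g (r ω) := hg.comp hr
  set Z : Fin n → (Fin n → ℝ) → ℝ := fun j v => (v j - m j) / σ j
  have hZ : ∀ j, HasSubgaussianMGF (fun ω => Z j (r ω)) 1 μ := fun j =>
    hasSubgaussianMGF_div_of_integral_exp_le (hσpos j).ne' (hint j) (hsg j)
  have hZ' : ∀ j, HasSubgaussianMGF (fun ω => Z j (r' ω)) 1 μ := fun j =>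
    (hZ j).congr_identDistrib ((⟨hr.aemeasurable, hr'.aemeasurable, hiid⟩ :
      IdentDistrib r r' μ μ).comp (u := Z j) (by fun_prop))
  have hmax : ∫ ω, Z (g (r ω)) (r ω) ^ 2 ∂μ ≤ 2 * log (2 * n) + 2 := by
    simpa using integral_sq_comp_index_le_two_mul_log_add_two hZ hX
  have hfresh : ∫ ω, Z (g (r ω)) (r' ω) ^ 2 ∂μ ≤ 1 :=
    integral_sq_comp_index_le_of_indepFun hX hr' (hindep.comp hg measurable_id)
      (fun j => by fun_prop) hZ'
  have hscale : ∀ ω, r ω (g (r ω)) - r' ω (g (r ω))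
      = σ (g (r ω)) * (Z (g (r ω)) (r ω) - Z (g (r ω)) (r' ω)) := fun ω => by
    simp only [Z]
    field_simp [(hσpos _).ne']
    ring
  calc ∫ ω, |r ω (g (r ω)) - r' ω (g (r ω))| ∂μ
      = ∫ ω, |σ (g (r ω)) * (Z (g (r ω)) (r ω) - Z (g (r ω)) (r' ω))| ∂μ := by
        simp_rw [hscale]
    _ ≤ √(∫ ω, σ (g (r ω)) ^ 2 ∂μ) * (√(∫ ω, Z (g (r ω)) (r ω) ^ 2 ∂μ)
          + √(∫ ω, Z (g (r ω)) (r' ω) ^ 2 ∂μ)) :=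
        integral_abs_mul_sub_le (memLp_comp_index (fun j => memLp_const (σ j)) hX)
          (memLp_comp_index (fun j => (hZ j).memLp 2) hX)
          (memLp_comp_index (fun j => (hZ' j).memLp 2) hX)
    _ ≤ √(∫ ω, σ (g (r ω)) ^ 2 ∂μ) * (√(2 * log (2 * n) + 2) + √1) := by
        gcongr
    _ = _ := by
        rw [sqrt_one]
        ring

/-- For i.i.d. reward vectors `r, r'` with `σ_j`-subgaussian deviations and an index
`X = g(r)` depending only on `r`:
`E[|r_X − r'_X|] ≤ (1 + sqrt(2 log(2n) + 2))·sqrt(E[σ_X²])`. -/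
theorem expectation_abs_diff_iid_random_index
    {Ω : Type*} [MeasurableSpace Ω] (μ : Measure Ω) [IsProbabilityMeasure μ]
    (n : ℕ) (hn : 1 ≤ n)
    (r r' : Ω → Fin n → ℝ) (σ m : Fin n → ℝ)
    (hr : Measurable r) (hr' : Measurable r')
    (hσpos : ∀ j, 0 < σ j)
    (hindep : ProbabilityTheory.IndepFun r r' μ)
    (hiid : Measure.map r μ = Measure.map r' μ)
    (hm : ∀ j, m j = ∫ ω, r ω j ∂μ)
    (g : (Fin n → ℝ) → Fin n) (hg : Measurable g)
    (hint : ∀ (j : Fin n) (l : ℝ),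
      Integrable (fun ω => Real.exp (l * (r ω j - m j))) μ)
    (hsg : ∀ (j : Fin n) (l : ℝ),
      ∫ ω, Real.exp (l * (r ω j - m j)) ∂μ ≤ Real.exp (l ^ 2 * σ j ^ 2 / 2)) :
    ∫ ω, |r ω (g (r ω)) - r' ω (g (r ω))| ∂μ
      ≤ (1 + Real.sqrt (2 * Real.log (2 * n) + 2)) *
          Real.sqrt (∫ ω, (σ (g (r ω))) ^ 2 ∂μ) :=
  expectation_abs_diff_iid_random_index_general μ n r r' σ m hr hr' hσpos hindep hiid g hg hint hsg
end
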